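/- Monotonicity of Must and antimonotonicity of Can: for all Kernel Esterel programs p, constructive events E ≤ E' (pointwise in the flat information order ⊥ < +, ⊥ < −), and flags b ≤ b' (where − ≤ +), one has Must_S(p,E) ⊆ Must_S(p,E'), Must_K(p,E) ⊆ Must_K(p,E'), Can^{b'}_S(p,E') ⊆ Can^b_S(p,E), and Can^{b'}_K(p,E') ⊆ Can^b_K(p,E). -/

import Mathlib

namespace EsterelCBS

/-- Signals are represented by natural numbers. -/
abbrev Signal := ℕ

/-- Kernel Esterel statements.  `done k` unifies `nothing` (k = 0), `pause` (k = 1)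
and `exit k` (k ≥ 2).  `awaitImm pol s` waits for `s` to have the status given by
the polarity `pol` (`awaitImm true s` is the kernel statement `await immediate s`;
the negative polarity is used in the derivative of `suspend`). -/
inductive Stmt : Type
  | done (k : ℕ)
  | emit (s : Signal)
  | awaitImm (pol : Bool) (s : Signal)
  | present (s : Signal) (p q : Stmt)
  | suspend (s : Signal) (p : Stmt)
  | seq (p q : Stmt)
  | par (p q : Stmt)
  | loop (p : Stmt)
  | trap (p : Stmt)
  | shift (p : Stmt)
  | sig (s : Signal) (p : Stmt)
  deriving DecidableEq

/-- Constructive signal statuses: present (+), absent (−), or unknown (⊥). -/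
inductive CStatus : Type
  | pos
  | neg
  | bot
  deriving DecidableEq

/-- Statuses are combined by "present dominates, unknown next". -/
def CStatus.or : CStatus → CStatus → CStatus
  | .pos, _ => .pos
  | _, .pos => .pos
  | .bot, _ => .bot
  | _, .bot => .bot
  | _, _ => .neg

/-- A constructive event is a finite map from signals to constructive statuses;
`none` means the signal is not in scope (not visible). -/
abbrev CEvent := Signal → Option CStatus

namespace CEvent

/-- The empty output event relative to `E`: every visible signal is absent. -/
def blank (E : CEvent) : CEvent := fun s => (E s).map fun _ => CStatus.neg

/-- The singleton output event emitting `s` (all other visible signals absent). -/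
def single (E : CEvent) (s : Signal) : CEvent :=
  fun t => if t = s then (E t).map fun _ => CStatus.pos
           else (E t).map fun _ => CStatus.neg

/-- Union of two output events. -/
def union (E₁ E₂ : CEvent) : CEvent := fun s =>
  match E₁ s, E₂ s with
  | some a, some b => some (a.or b)
  | some a, none => some a
  | none, o => o

/-- Update the status of a signal (possibly adding it to the domain). -/
def update (E : CEvent) (s : Signal) (v : CStatus) : CEvent :=
  fun t => if t = s then some v else E t

/-- Restriction of an output event by a local signal declaration: the binding of
the (new) signal `s` is replaced by the appropriate status − for the (old) `s`
(which is absent if the old `s` was not in scope). -/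
def restrict (E' : CEvent) (s : Signal) (old : Option CStatus) : CEvent :=
  fun t => if t = s then old.map (fun _ => CStatus.neg) else E' t

/-- The domain of an event: the set of signals in scope. -/
def dom (E : CEvent) : Set Signal := {s | E s ≠ none}

/-- A constructive event is total when no signal is mapped to ⊥. -/
def Total (E : CEvent) : Prop := ∀ s, E s ≠ some CStatus.bot

end CEvent

/-- Completion-code shift `↑` used by the `shift` statement. -/
def kup (k : ℕ) : ℕ := if 2 ≤ k then k + 1 else k

/-- Completion-code decrement `↓` used by the `trap` statement. -/
def kdown (k : ℕ) : ℕ := if k < 2 then k else if k = 2 then 0 else k - 1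

/-- The δ function killing derivatives when the completion code is not 1. -/
def delta (k : ℕ) (p : Stmt) : Stmt := if k = 1 then p else .done 0

/-- The constructive status corresponding to a polarity. -/
def polSt : Bool → CStatus
  | true => .pos
  | false => .neg

/-- Pairwise max of two sets of completion codes
(`Max K L = { max k l | k ∈ K, l ∈ L }`). -/
def codeMax (K L : Finset ℕ) : Finset ℕ := K.biUnion fun k => L.image (max k)

mutual

/-- `must p E = (Must_S(p,E), Must_K(p,E))`: the signals that must be emitted and
the completion codes that must be returned by `p` under `E` (paper Fig. 2). -/
def must : Stmt → CEvent → Finset Signal × Finset ℕ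
  | .done k, _ => (∅, {k})
  | .emit s, _ => ({s}, {0})
  | .awaitImm pol s, E =>
      if E s = some (polSt pol) then (∅, {0})
      else if E s = some (polSt (!pol)) then (∅, {1})
      else (∅, ∅)
  | .present s p q, E =>
      if E s = some .pos then must p E
      else if E s = some .neg then must q E
      else (∅, ∅)
  | .suspend _ p, E => must p E
  | .seq p q, E =>
      if 0 ∈ (must p E).2 then
        ((must p E).1 ∪ (must q E).1, (must q E).2)
      else must p E
  | .par p q, E =>
      ((must p E).1 ∪ (must q E).1, codeMax (must p E).2 (must q E).2)
  | .loop p, E => must p E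
  | .trap p, E => ((must p E).1, (must p E).2.image kdown)
  | .shift p, E => ((must p E).1, (must p E).2.image kup)
  | .sig s p, E =>
      if s ∈ (must p (E.update s .bot)).1 then
        (((must p (E.update s .pos)).1).erase s, (must p (E.update s .pos)).2)
      else if s ∉ (can true p (E.update s .bot)).1 then
        (((must p (E.update s .neg)).1).erase s, (must p (E.update s .neg)).2)
      else
        (((must p (E.update s .bot)).1).erase s, (must p (E.update s .bot)).2)

/-- `can b p E = (Can^b_S(p,E), Can^b_K(p,E))`: the signals that can be emitted
and the completion codes that can be returned by `p` under `E` (paper Fig. 2). -/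
def can : Bool → Stmt → CEvent → Finset Signal × Finset ℕ
  | _, .done k, _ => (∅, {k})
  | _, .emit s, _ => ({s}, {0})
  | _, .awaitImm pol s, E =>
      if E s = some (polSt pol) then (∅, {0})
      else if E s = some (polSt (!pol)) then (∅, {1})
      else (∅, {0, 1})
  | b, .present s p q, E =>
      if E s = some .pos then can b p E
      else if E s = some .neg then can b q E
      else ((can false p E).1 ∪ (can false q E).1,
            (can false p E).2 ∪ (can false q E).2)
  | b, .suspend _ p, E => can b p E
  | b, .seq p q, E =>
      if 0 ∉ (can b p E).2 then can b p E
      else if 0 ∈ (must p E).2 ∧ b = true then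
        ((can b p E).1 ∪ (can true q E).1,
         ((can b p E).2.erase 0) ∪ (can true q E).2)
      else
        ((can b p E).1 ∪ (can false q E).1,
         ((can b p E).2.erase 0) ∪ (can false q E).2)
  | b, .par p q, E =>
      ((can b p E).1 ∪ (can b q E).1, codeMax (can b p E).2 (can b q E).2)
  | b, .loop p, E => can b p E
  | b, .trap p, E => ((can b p E).1, (can b p E).2.image kdown)
  | b, .shift p, E => ((can b p E).1, (can b p E).2.image kup)
  | b, .sig s p, E =>
      if s ∈ (must p (E.update s .bot)).1 ∧ b = true then
        (((can b p (E.update s .pos)).1).erase s, (can b p (E.update s .pos)).2)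
      else if s ∉ (can true p (E.update s .bot)).1 then
        (((can b p (E.update s .neg)).1).erase s, (can b p (E.update s .neg)).2)
      else
        (((can b p (E.update s .bot)).1).erase s, (can b p (E.update s .bot)).2)

end

/-- The constructive behavioral semantics (CBS): `CBS E p E' k p'` means
`E ⊢ p → (E', k, p')`.  The rules are the same as for the logical behavioral
semantics except for the local signal declaration rules, which use `must`/`can`. -/
inductive CBS : CEvent → Stmt → CEvent → ℕ → Stmt → Prop
  | done {E : CEvent} {k : ℕ} :
      CBS E (.done k) E.blank k (.done 0)
  | emit {E : CEvent} {s : Signal} (h : E s ≠ none) :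
      CBS E (.emit s) (E.single s) 0 (.done 0)
  | awaitP {E : CEvent} {pol : Bool} {s : Signal}
      (h : E s = some (polSt pol)) :
      CBS E (.awaitImm pol s) E.blank 0 (.done 0)
  | awaitM {E : CEvent} {pol : Bool} {s : Signal}
      (h : E s = some (polSt (!pol))) :
      CBS E (.awaitImm pol s) E.blank 1 (.awaitImm pol s)
  | presentP {E E' : CEvent} {s : Signal} {p q p' : Stmt} {k : ℕ}
      (h : E s = some .pos) (hp : CBS E p E' k p') :
      CBS E (.present s p q) E' k p'
  | presentM {E E' : CEvent} {s : Signal} {p q q' : Stmt} {k : ℕ}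
      (h : E s = some .neg) (hq : CBS E q E' k q') :
      CBS E (.present s p q) E' k q'
  | suspend {E E' : CEvent} {s : Signal} {p p' : Stmt} {k : ℕ}
      (hp : CBS E p E' k p') :
      CBS E (.suspend s p) E' k
        (delta k (.seq (.awaitImm false s) (.suspend s p')))
  | seqK {E E' : CEvent} {p q p' : Stmt} {k : ℕ}
      (h : k ≠ 0) (hp : CBS E p E' k p') :
      CBS E (.seq p q) E' k (delta k (.seq p' q))
  | seq0 {E E₁ E₂ : CEvent} {p q p' q' : Stmt} {k : ℕ}
      (hp : CBS E p E₁ 0 p') (hq : CBS E q E₂ k q') :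
      CBS E (.seq p q) (E₁.union E₂) k q'
  | loop {E E' : CEvent} {p p' : Stmt} {k : ℕ}
      (h : k ≠ 0) (hp : CBS E p E' k p') :
      CBS E (.loop p) E' k (delta k (.seq p' (.loop p)))
  | trap {E E' : CEvent} {p p' : Stmt} {k : ℕ}
      (hp : CBS E p E' k p') :
      CBS E (.trap p) E' (kdown k) (delta k (.trap p'))
  | shift {E E' : CEvent} {p p' : Stmt} {k : ℕ}
      (hp : CBS E p E' k p') :
      CBS E (.shift p) E' (kup k) (delta k (.shift p'))
  | par {E E₁ E₂ : CEvent} {p q p' q' : Stmt} {k₁ k₂ : ℕ}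
      (hp : CBS E p E₁ k₁ p') (hq : CBS E q E₂ k₂ q') :
      CBS E (.par p q) (E₁.union E₂) (max k₁ k₂)
        (delta (max k₁ k₂) (.par p' q'))
  | sigP {E E' : CEvent} {s : Signal} {p p' : Stmt} {k : ℕ}
      (h : s ∈ (must p (E.update s .bot)).1)
      (hp : CBS (E.update s .pos) p E' k p') :
      CBS E (.sig s p) (E'.restrict s (E s)) k (delta k (.sig s p'))
  | sigM {E E' : CEvent} {s : Signal} {p p' : Stmt} {k : ℕ}
      (h : s ∉ (can true p (E.update s .bot)).1)
      (hp : CBS (E.update s .neg) p E' k p') :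
      CBS E (.sig s p) (E'.restrict s (E s)) k (delta k (.sig s p'))

end EsterelCBS

namespace EsterelCBS

/-- The flat information order on constructive statuses: `⊥ < +`, `⊥ < −`. -/
def CStatus.le (a b : CStatus) : Prop := a = .bot ∨ a = b

/-- The pointwise information order on constructive events (same domain,
pointwise flat order on statuses). -/
def CEvent.le (E E' : CEvent) : Prop :=
  (∀ s, (E s).isSome = (E' s).isSome) ∧
  ∀ s a b, E s = some a → E' s = some b → CStatus.le a b

/-- The order on flags: `− ≤ +`. -/
def flagLe (b b' : Bool) : Prop := b = b' ∨ (b = false ∧ b' = true)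

/- ### Auxiliary lemmas -/

lemma flagLe_refl (b : Bool) : flagLe b b := Or.inl rfl

lemma flagLe_false (b : Bool) : flagLe false b := by
  cases b
  · exact Or.inl rfl
  · exact Or.inr ⟨rfl, rfl⟩

lemma flagLe_true (b : Bool) : flagLe b true := by
  cases b
  · exact Or.inr ⟨rfl, rfl⟩
  · exact Or.inl rfl

lemma flagLe_eq_true {b b' : Bool} (h : flagLe b b') (hb : b = true) : b' = true := by
  rcases h with h | ⟨h1, h2⟩
  · exact h ▸ hb
  · exact h2

lemma le_update {E E' : CEvent} (h : CEvent.le E E') (s : Signal) {x y : CStatus}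
    (hxy : CStatus.le x y) : CEvent.le (E.update s x) (E'.update s y) := by
  constructor
  · intro t
    by_cases ht : t = s <;> simp [CEvent.update, ht, h.1 t]
  · intro t a c ha hc
    by_cases ht : t = s
    · simp only [CEvent.update, if_pos ht, Option.some.injEq] at ha hc
      subst ha; subst hc; exact hxy
    · simp only [CEvent.update, if_neg ht] at ha hc
      exact h.2 t a c ha hc

lemma le_eq_some {E E' : CEvent} (h : CEvent.le E E') {s : Signal} {v : CStatus}
    (hv : E s = some v) (hb : v ≠ .bot) : E' s = some v := by
  have h1 := h.1 s
  rw [hv] at h1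
  cases hE' : E' s with
  | none => rw [hE'] at h1; simp at h1
  | some w =>
    rcases h.2 s v w hv hE' with h2 | h2
    · exact absurd h2 hb
    · rw [h2]

lemma le_eq_none {E E' : CEvent} (h : CEvent.le E E') {s : Signal}
    (hv : E s = none) : E' s = none := by
  have h1 := h.1 s
  rw [hv] at h1
  cases hE' : E' s with
  | none => rfl
  | some w => rw [hE'] at h1; simp at h1

lemma le_isSome {E E' : CEvent} (h : CEvent.le E E') {s : Signal} {v : CStatus}
    (hv : E s = some v) : ∃ w, E' s = some w := by
  have h1 := h.1 s
  rw [hv] at h1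
  cases hE' : E' s with
  | none => rw [hE'] at h1; simp at h1
  | some w => exact ⟨w, rfl⟩

lemma codeMax_subset {K K' L L' : Finset ℕ} (hK : K ⊆ K') (hL : L ⊆ L') :
    codeMax K L ⊆ codeMax K' L' := by
  intro x hx
  simp only [codeMax, Finset.mem_biUnion, Finset.mem_image] at hx ⊢
  obtain ⟨k, hk, l, hl, rfl⟩ := hx
  exact ⟨k, hK hk, l, hL hl, rfl⟩

lemma codeMax_card {K L : Finset ℕ} (hK : K.card ≤ 1) (hL : L.card ≤ 1) :
    (codeMax K L).card ≤ 1 := by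
  apply Finset.card_le_one.2
  intro a ha c hc
  simp only [codeMax, Finset.mem_biUnion, Finset.mem_image] at ha hc
  obtain ⟨k1, hk1, l1, hl1, rfl⟩ := ha
  obtain ⟨k2, hk2, l2, hl2, rfl⟩ := hc
  rw [Finset.card_le_one.1 hK k1 hk1 k2 hk2, Finset.card_le_one.1 hL l1 hl1 l2 hl2]

lemma mustK_card : ∀ (p : Stmt) (E : CEvent), (must p E).2.card ≤ 1 := by
  intro p
  induction p with
  | done k => intro E; simp [must]
  | emit s => intro E; simp [must]
  | awaitImm pol s => intro E; simp only [must]; split_ifs <;> simp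
  | present s p q ihp ihq =>
    intro E; simp only [must]; split_ifs
    · exact ihp E
    · exact ihq E
    · simp
  | suspend s p ih => intro E; simpa only [must] using ih E
  | seq p q ihp ihq =>
    intro E; simp only [must]; split_ifs
    · exact ihq E
    · exact ihp E
  | par p q ihp ihq =>
    intro E; simp only [must]; exact codeMax_card (ihp E) (ihq E)
  | loop p ih => intro E; simpa only [must] using ih E
  | trap p ih =>
    intro E; simp only [must]; exact le_trans Finset.card_image_le (ih E)
  | shift p ih =>
    intro E; simp only [must]; exact le_trans Finset.card_image_le (ih E)
  | sig s p ih =>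
    intro E; simp only [must]; split_ifs
    · exact ih _
    · exact ih _
    · exact ih _

lemma must_sub_can : ∀ (p : Stmt) (E : CEvent),
    (must p E).1 ⊆ (can true p E).1 ∧ (must p E).2 ⊆ (can true p E).2 := by
  intro p
  induction p with
  | done k => intro E; simp [must, can]
  | emit s => intro E; simp [must, can]
  | awaitImm pol s =>
    intro E; simp only [must, can]; split_ifs <;> simp
  | present s p q ihp ihq =>
    intro E; simp only [must, can]; split_ifs
    · exact ihp E
    · exact ihq E
    · exact ⟨Finset.empty_subset _, Finset.empty_subset _⟩
  | suspend s p ih => intro E; simpa only [must, can] using ih E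
  | seq p q ihp ihq =>
    intro E
    obtain ⟨hp1, hp2⟩ := ihp E
    obtain ⟨hq1, hq2⟩ := ihq E
    simp only [must, can, and_true]
    split_ifs with h1 h2 h3
    · exact ⟨Finset.union_subset_union hp1 hq1, hq2.trans Finset.subset_union_right⟩
    · exact absurd (hp2 h1) h2
    · refine ⟨hp1.trans Finset.subset_union_left,
        fun k hk => Finset.mem_union_left _ (Finset.mem_erase.2 ⟨?_, hp2 hk⟩)⟩
      rintro rfl; exact h1 hk
    · exact ⟨hp1, hp2⟩
  | par p q ihp ihq =>
    intro E
    simp only [must, can]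
    exact ⟨Finset.union_subset_union (ihp E).1 (ihq E).1,
      codeMax_subset (ihp E).2 (ihq E).2⟩
  | loop p ih => intro E; simpa only [must, can] using ih E
  | trap p ih =>
    intro E; simp only [must, can]
    exact ⟨(ih E).1, Finset.image_subset_image (ih E).2⟩
  | shift p ih =>
    intro E; simp only [must, can]
    exact ⟨(ih E).1, Finset.image_subset_image (ih E).2⟩
  | sig s p ih =>
    intro E
    simp only [must, can, and_true]
    split_ifs with h1 h2
    · exact ⟨Finset.erase_subset_erase s (ih _).1, (ih _).2⟩
    · exact ⟨Finset.erase_subset_erase s (ih _).1, (ih _).2⟩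
    · exact ⟨Finset.erase_subset_erase s (ih _).1, (ih _).2⟩

/-- **Monotonicity of Must and antimonotonicity of Can**: for `E ≤ E'` and
`b ≤ b'`, `Must(p,E) ⊆ Must(p,E')` (both components) and
`Can^{b'}(p,E') ⊆ Can^b(p,E)` (both components). -/
theorem must_mono_can_antimono :
    ∀ (p : Stmt) (E E' : CEvent) (b b' : Bool),
      CEvent.le E E' → flagLe b b' →
      (must p E).1 ⊆ (must p E').1 ∧
      (must p E).2 ⊆ (must p E').2 ∧
      (can b' p E').1 ⊆ (can b p E).1 ∧
      (can b' p E').2 ⊆ (can b p E).2 := by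
  intro p
  induction p with
  | done k => intro E E' b b' hE hb; simp [must, can]
  | emit s => intro E E' b b' hE hb; simp [must, can]
  | awaitImm pol s =>
    intro E E' b b' hE hb
    cases hEs : E s with
    | some v =>
      cases v with
      | pos =>
        have hE's : E' s = some .pos := le_eq_some hE hEs (by simp)
        cases pol <;> simp [must, can, hEs, hE's, polSt]
      | neg =>
        have hE's : E' s = some .neg := le_eq_some hE hEs (by simp)
        cases pol <;> simp [must, can, hEs, hE's, polSt]
      | bot =>
        have h1 : E s ≠ some (polSt pol) := by rw [hEs]; cases pol <;> simp [polSt]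
        have h2 : E s ≠ some (polSt (!pol)) := by rw [hEs]; cases pol <;> simp [polSt]
        simp only [must, can, if_neg h1, if_neg h2]
        refine ⟨by simp, by simp, ?_, ?_⟩ <;> (split_ifs <;> simp)
    | none =>
      have hE's : E' s = none := le_eq_none hE hEs
      have h1 : E s ≠ some (polSt pol) := by simp [hEs]
      have h2 : E s ≠ some (polSt (!pol)) := by simp [hEs]
      have h1' : E' s ≠ some (polSt pol) := by simp [hE's]
      have h2' : E' s ≠ some (polSt (!pol)) := by simp [hE's]
      simp only [must, can, if_neg h1, if_neg h2, if_neg h1', if_neg h2']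
      refine ⟨by simp, by simp, by simp, by simp⟩
  | present s p q ihp ihq =>
    intro E E' b b' hE hb
    cases hEs : E s with
    | some v =>
      cases v with
      | pos =>
        have hE's : E' s = some .pos := le_eq_some hE hEs (by simp)
        simpa only [must, can, hEs, hE's, if_pos rfl, if_true] using ihp E E' b b' hE hb
      | neg =>
        have hE's : E' s = some .neg := le_eq_some hE hEs (by simp)
        have c1 : (some CStatus.neg) ≠ some CStatus.pos := by simp
        simpa only [must, can, hEs, hE's, if_neg c1, if_pos rfl, if_true] using ihq E E' b b' hE hb
      | bot =>
        have c1 : (some CStatus.bot) ≠ some CStatus.pos := by simp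
        have c2 : (some CStatus.bot) ≠ some CStatus.neg := by simp
        refine ⟨?_, ?_, ?_, ?_⟩
        · simp only [must, hEs, if_neg c1, if_neg c2]; exact Finset.empty_subset _
        · simp only [must, hEs, if_neg c1, if_neg c2]; exact Finset.empty_subset _
        · obtain ⟨w, hE's⟩ := le_isSome hE hEs
          cases w with
          | pos =>
            have h := ihp E E' false b' hE (flagLe_false b')
            simp only [can, hEs, hE's, if_neg c1, if_neg c2, if_pos rfl]
            exact h.2.2.1.trans Finset.subset_union_left
          | neg =>
            have h := ihq E E' false b' hE (flagLe_false b')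
            simp only [can, hEs, hE's, if_neg c1, if_neg c2, if_pos rfl]
            exact h.2.2.1.trans Finset.subset_union_right
          | bot =>
            have hp := ihp E E' false false hE (flagLe_refl false)
            have hq := ihq E E' false false hE (flagLe_refl false)
            simp only [can, hEs, hE's, if_neg c1, if_neg c2]
            exact Finset.union_subset_union hp.2.2.1 hq.2.2.1
        · obtain ⟨w, hE's⟩ := le_isSome hE hEs
          cases w with
          | pos =>
            have h := ihp E E' false b' hE (flagLe_false b')
            simp only [can, hEs, hE's, if_neg c1, if_neg c2, if_pos rfl]
            exact h.2.2.2.trans Finset.subset_union_left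
          | neg =>
            have h := ihq E E' false b' hE (flagLe_false b')
            simp only [can, hEs, hE's, if_neg c1, if_neg c2, if_pos rfl]
            exact h.2.2.2.trans Finset.subset_union_right
          | bot =>
            have hp := ihp E E' false false hE (flagLe_refl false)
            have hq := ihq E E' false false hE (flagLe_refl false)
            simp only [can, hEs, hE's, if_neg c1, if_neg c2]
            exact Finset.union_subset_union hp.2.2.2 hq.2.2.2
    | none =>
      have hE's : E' s = none := le_eq_none hE hEs
      have c1 : (none : Option CStatus) ≠ some CStatus.pos := by simp
      have c2 : (none : Option CStatus) ≠ some CStatus.neg := by simp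
      have hp := ihp E E' false false hE (flagLe_refl false)
      have hq := ihq E E' false false hE (flagLe_refl false)
      simp only [must, can, hEs, hE's, if_neg c1, if_neg c2]
      exact ⟨Finset.empty_subset _, Finset.empty_subset _,
        Finset.union_subset_union hp.2.2.1 hq.2.2.1,
        Finset.union_subset_union hp.2.2.2 hq.2.2.2⟩
  | suspend s p ih =>
    intro E E' b b' hE hb
    simpa only [must, can] using ih E E' b b' hE hb
  | seq p q ihp ihq =>
    intro E E' b b' hE hb
    obtain ⟨mp1, mp2, cp1, cp2⟩ := ihp E E' b b' hE hb
    obtain ⟨mq1, mq2, -, -⟩ := ihq E E' b b' hE hb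
    obtain ⟨-, -, cqff1, cqff2⟩ := ihq E E' false false hE (flagLe_refl false)
    obtain ⟨-, -, cqft1, cqft2⟩ := ihq E E' false true hE (flagLe_false true)
    obtain ⟨-, -, cqtt1, cqtt2⟩ := ihq E E' true true hE (flagLe_refl true)
    have mustPart : (must (.seq p q) E).1 ⊆ (must (.seq p q) E').1 ∧
        (must (.seq p q) E).2 ⊆ (must (.seq p q) E').2 := by
      simp only [must]
      by_cases h : 0 ∈ (must p E).2
      · rw [if_pos h, if_pos (mp2 h)]
        exact ⟨Finset.union_subset_union mp1 mq1, mq2⟩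
      · rw [if_neg h]
        by_cases h' : 0 ∈ (must p E').2
        · rw [if_pos h']
          have hemp : (must p E).2 = ∅ := by
            rw [Finset.eq_empty_iff_forall_notMem]
            intro k hk
            have hk0 : k = 0 := Finset.card_le_one.1 (mustK_card p E') k (mp2 hk) 0 h'
            exact h (hk0 ▸ hk)
          exact ⟨mp1.trans Finset.subset_union_left,
            by rw [hemp]; exact Finset.empty_subset _⟩
        · rw [if_neg h']
          exact ⟨mp1, mp2⟩
    have canPart : (can b' (.seq p q) E').1 ⊆ (can b (.seq p q) E).1 ∧
        (can b' (.seq p q) E').2 ⊆ (can b (.seq p q) E).2 := by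
      simp only [can]
      by_cases h0 : 0 ∈ (can b p E).2
      · rw [if_neg (not_not_intro h0)]
        by_cases h0' : 0 ∈ (can b' p E').2
        · rw [if_neg (not_not_intro h0')]
          by_cases hc : 0 ∈ (must p E).2 ∧ b = true
          · have hc' : 0 ∈ (must p E').2 ∧ b' = true := ⟨mp2 hc.1, flagLe_eq_true hb hc.2⟩
            rw [if_pos hc, if_pos hc']
            exact ⟨Finset.union_subset_union cp1 cqtt1,
              Finset.union_subset_union (Finset.erase_subset_erase 0 cp2) cqtt2⟩
          · rw [if_neg hc]
            by_cases hc' : 0 ∈ (must p E').2 ∧ b' = true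
            · rw [if_pos hc']
              exact ⟨Finset.union_subset_union cp1 cqft1,
                Finset.union_subset_union (Finset.erase_subset_erase 0 cp2) cqft2⟩
            · rw [if_neg hc']
              exact ⟨Finset.union_subset_union cp1 cqff1,
                Finset.union_subset_union (Finset.erase_subset_erase 0 cp2) cqff2⟩
        · rw [if_pos h0']
          have key : (can b' p E').1 ⊆ (can b p E).1 ∧
              ∀ k ∈ (can b' p E').2, k ∈ (can b p E).2.erase 0 := by
            refine ⟨cp1, fun k hk => Finset.mem_erase.2 ⟨?_, cp2 hk⟩⟩
            rintro rfl; exact h0' hk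
          split_ifs
          · exact ⟨key.1.trans Finset.subset_union_left,
              fun k hk => Finset.mem_union_left _ (key.2 k hk)⟩
          · exact ⟨key.1.trans Finset.subset_union_left,
              fun k hk => Finset.mem_union_left _ (key.2 k hk)⟩
      · have h0' : 0 ∉ (can b' p E').2 := fun hk => h0 (cp2 hk)
        rw [if_pos h0, if_pos h0']
        exact ⟨cp1, cp2⟩
    exact ⟨mustPart.1, mustPart.2, canPart.1, canPart.2⟩
  | par p q ihp ihq =>
    intro E E' b b' hE hb
    obtain ⟨mp1, mp2, cp1, cp2⟩ := ihp E E' b b' hE hb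
    obtain ⟨mq1, mq2, cq1, cq2⟩ := ihq E E' b b' hE hb
    simp only [must, can]
    exact ⟨Finset.union_subset_union mp1 mq1, codeMax_subset mp2 mq2,
      Finset.union_subset_union cp1 cq1, codeMax_subset cp2 cq2⟩
  | loop p ih =>
    intro E E' b b' hE hb
    simpa only [must, can] using ih E E' b b' hE hb
  | trap p ih =>
    intro E E' b b' hE hb
    obtain ⟨m1, m2, c1, c2⟩ := ih E E' b b' hE hb
    simp only [must, can]
    exact ⟨m1, Finset.image_subset_image m2, c1, Finset.image_subset_image c2⟩
  | shift p ih =>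
    intro E E' b b' hE hb
    obtain ⟨m1, m2, c1, c2⟩ := ih E E' b b' hE hb
    simp only [must, can]
    exact ⟨m1, Finset.image_subset_image m2, c1, Finset.image_subset_image c2⟩
  | sig s p ih =>
    intro E E' b b' hE hb
    have hbotbot := le_update hE s (show CStatus.le .bot .bot from Or.inl rfl)
    have hpospos := le_update hE s (show CStatus.le .pos .pos from Or.inr rfl)
    have hnegneg := le_update hE s (show CStatus.le .neg .neg from Or.inr rfl)
    have hbotpos := le_update hE s (show CStatus.le .bot .pos from Or.inl rfl)
    have hbotneg := le_update hE s (show CStatus.le .bot .neg from Or.inl rfl)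
    have mono_bot := ih _ _ true true hbotbot (flagLe_refl true)
    have hAA' : s ∈ (must p (E.update s .bot)).1 → s ∈ (must p (E'.update s .bot)).1 :=
      fun h => mono_bot.1 h
    have hCan' : (can true p (E'.update s .bot)).1 ⊆ (can true p (E.update s .bot)).1 :=
      mono_bot.2.2.1
    have hBnA' : s ∉ (can true p (E.update s .bot)).1 → s ∉ (must p (E'.update s .bot)).1 :=
      fun h hm => h (hCan' ((must_sub_can p _).1 hm))
    have hBB' : s ∉ (can true p (E.update s .bot)).1 → s ∉ (can true p (E'.update s .bot)).1 :=
      fun h hm => h (hCan' hm)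
    have mustPart : (must (.sig s p) E).1 ⊆ (must (.sig s p) E').1 ∧
        (must (.sig s p) E).2 ⊆ (must (.sig s p) E').2 := by
      simp only [must]
      by_cases cA : s ∈ (must p (E.update s .bot)).1
      · rw [if_pos cA, if_pos (hAA' cA)]
        have h := ih _ _ true true hpospos (flagLe_refl true)
        exact ⟨Finset.erase_subset_erase s h.1, h.2.1⟩
      · rw [if_neg cA]
        by_cases cB : s ∉ (can true p (E.update s .bot)).1
        · rw [if_pos cB, if_neg (hBnA' cB), if_pos (hBB' cB)]
          have h := ih _ _ true true hnegneg (flagLe_refl true)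
          exact ⟨Finset.erase_subset_erase s h.1, h.2.1⟩
        · rw [if_neg cB]
          by_cases cA' : s ∈ (must p (E'.update s .bot)).1
          · rw [if_pos cA']
            have h := ih _ _ true true hbotpos (flagLe_refl true)
            exact ⟨Finset.erase_subset_erase s h.1, h.2.1⟩
          · rw [if_neg cA']
            by_cases cB' : s ∉ (can true p (E'.update s .bot)).1
            · rw [if_pos cB']
              have h := ih _ _ true true hbotneg (flagLe_refl true)
              exact ⟨Finset.erase_subset_erase s h.1, h.2.1⟩
            · rw [if_neg cB']
              exact ⟨Finset.erase_subset_erase s mono_bot.1, mono_bot.2.1⟩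
    have canPart : (can b' (.sig s p) E').1 ⊆ (can b (.sig s p) E).1 ∧
        (can b' (.sig s p) E').2 ⊆ (can b (.sig s p) E).2 := by
      simp only [can]
      by_cases cAb : s ∈ (must p (E.update s .bot)).1 ∧ b = true
      · have hb' : b' = true := flagLe_eq_true hb cAb.2
        rw [if_pos cAb, if_pos (⟨hAA' cAb.1, hb'⟩ :
          s ∈ (must p (E'.update s .bot)).1 ∧ b' = true)]
        have h := ih _ _ b b' hpospos hb
        exact ⟨Finset.erase_subset_erase s h.2.2.1, h.2.2.2⟩
      · rw [if_neg cAb]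
        by_cases cB : s ∉ (can true p (E.update s .bot)).1
        · rw [if_pos cB, if_neg (fun h => hBnA' cB h.1 :
            ¬(s ∈ (must p (E'.update s .bot)).1 ∧ b' = true)), if_pos (hBB' cB)]
          have h := ih _ _ b b' hnegneg hb
          exact ⟨Finset.erase_subset_erase s h.2.2.1, h.2.2.2⟩
        · rw [if_neg cB]
          by_cases cA'b' : s ∈ (must p (E'.update s .bot)).1 ∧ b' = true
          · have hb'2 : b' = true := cA'b'.2
            subst hb'2
            rw [if_pos cA'b']
            have h := ih _ _ b true hbotpos (flagLe_true b)
            exact ⟨Finset.erase_subset_erase s h.2.2.1, h.2.2.2⟩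
          · rw [if_neg cA'b']
            by_cases cB' : s ∉ (can true p (E'.update s .bot)).1
            · rw [if_pos cB']
              have h := ih _ _ b b' hbotneg hb
              exact ⟨Finset.erase_subset_erase s h.2.2.1, h.2.2.2⟩
            · rw [if_neg cB']
              have h := ih _ _ b b' hbotbot hb
              exact ⟨Finset.erase_subset_erase s h.2.2.1, h.2.2.2⟩
    exact ⟨mustPart.1, mustPart.2, canPart.1, canPart.2⟩

end EsterelCBS
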